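/- arXiv:2602.07992 — 2 statements merged into one kernel-verified Lean document; each statement's English description precedes it below -/
import Mathlib

section
/- Under the RLVR task-selection setup, for any CoT step s ∈ [S], iteration t ≥ 0, task index j ∈ [J], and any fixed string x_{s−1} consisting of a prompt followed by s−1 CoT tokens: if ρ^{(t)}_{s,j} > 0, then the expectation over the training batch at iteration t of the logit update at the token σ_j(x_{s−1}) satisfies E[(f_{θ^{(t+1)}}(x_{s−1}) − f_{θ^{(t)}}(x_{s−1}))[σ_j(x_{s−1})]] = η·γ²·P_t(A_{s,j} | V=1)·(1 − P_t(A_{s,j}))·(1 − 1/ρ^{(t)}_{s,j}); and if ρ^{(t)}_{s,j} = 0, then this expectation equals −η·γ²·P_t(A_{s,j}). -/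
/-!
Since the tasks pick pairwise distinct tokens and the features `h s j` are orthonormal, the logit
of `σ_j(x)` at step `s` is `γ ⟪h s j, θ⟫` and `π_θ(σ_j(x) | x)` is a constant `κ` independent of
`x`; the REINFORCE step therefore moves that logit by `η γ²` times the empirical discrepancy
`Q_{s,j}`. Averaging over a batch of accepted trajectories gives `η γ² (P(A | V) - κ)`, and the
chain rule of the autoregressive sampler gives `P(A) = κ`. The stated form is the identity
`P(A | V) - P(A) = P(A | V) (1 - P(A)) (1 - 1/ρ)`.
-/

open scoped BigOperators RealInnerProductSpace ENNReal

noncomputable section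

namespace RLVR

/-- Softmax distribution over a finite vocabulary. -/
def softmax {V : Type*} [Fintype V] (L : V → ℝ) (y : V) : ℝ :=
  Real.exp (L y) / ∑ w, Real.exp (L w)

variable {V : Type*} [Fintype V] [DecidableEq V] [Nonempty V]
variable {P : Type*} [Fintype P]
variable {J S Bsz : ℕ}

/-- The model logits: `f_θ(x)[v] = Σ_j γ·1[σ_j(x) = v]·⟨h_{s,j}, θ⟩`, where the
positional index `s` records the number of already generated CoT tokens in `x`. -/
def model (γ : ℝ) (σ : Fin J → List V → V)
    (h : Fin S → Fin J → EuclideanSpace ℝ P)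
    (θ : EuclideanSpace ℝ P) (s : Fin S) (x : List V) : V → ℝ :=
  fun v => ∑ j : Fin J, (if σ j x = v then γ else 0) * ⟪h s j, θ⟫

/-- The autoregressive policy `π_θ(y | x) = Softmax(f_θ(x))[y]`. -/
def policy (γ : ℝ) (σ : Fin J → List V → V)
    (h : Fin S → Fin J → EuclideanSpace ℝ P)
    (θ : EuclideanSpace ℝ P) (s : Fin S) (x : List V) (y : V) : ℝ :=
  softmax (model γ σ h θ s x) y

/-- A trajectory: a prompt together with the `S` generated CoT tokens. -/
abbrev Traj (V : Type*) (S : ℕ) := List V × (Fin S → V)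

/-- The prefix `x_n`: the prompt followed by the first `n` generated tokens. -/
def pref (ω : Traj V S) (n : ℕ) : List V := ω.1 ++ (List.ofFn ω.2).take n

/-- The full generated string `x_S`. -/
def fullStr (ω : Traj V S) : List V := ω.1 ++ List.ofFn ω.2

/-- Density of a trajectory under prompt distribution `D` and parameters `θ`. -/
def dens (D : List V → ℝ) (γ : ℝ) (σ : Fin J → List V → V)
    (h : Fin S → Fin J → EuclideanSpace ℝ P) (θ : EuclideanSpace ℝ P)
    (ω : Traj V S) : ℝ :=
  D ω.1 * ∏ s : Fin S, policy γ σ h θ s (pref ω s.val) (ω.2 s)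

/-- Probability `P_θ(E)` of an event `E` over trajectories. -/
def Pr (D : List V → ℝ) (γ : ℝ) (σ : Fin J → List V → V)
    (h : Fin S → Fin J → EuclideanSpace ℝ P) (θ : EuclideanSpace ℝ P)
    (E : Set (Traj V S)) : ℝ :=
  ∑' ω : Traj V S, Set.indicator E (dens D γ σ h θ) ω

/-- Conditional probability `P_θ(E | F)`. -/
def condPr (D : List V → ℝ) (γ : ℝ) (σ : Fin J → List V → V)
    (h : Fin S → Fin J → EuclideanSpace ℝ P) (θ : EuclideanSpace ℝ P)
    (E F : Set (Traj V S)) : ℝ :=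
  Pr D γ σ h θ (E ∩ F) / Pr D γ σ h θ F

/-- The event `A_{s,j}` that task `σ_j` is selected at step `s`. -/
def Av (σ : Fin J → List V → V) (s : Fin S) (j : Fin J) : Set (Traj V S) :=
  {ω | ω.2 s = σ j (pref ω s.val)}

/-- The event that the verifier accepts the final string. -/
def VE (Verif : List V → Bool) : Set (Traj V S) :=
  {ω | Verif (fullStr ω) = true}

/-- The task-advantage ratio `ρ^θ_{s,j} = P_θ(V=1 | A_{s,j}) / P_θ(V=1 | A_{s,j}ᶜ)`,
valued in `ℝ≥0∞` (so that a vanishing denominator yields `∞`, matching the paper's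
conventions). -/
def ratio (D : List V → ℝ) (γ : ℝ) (σ : Fin J → List V → V)
    (h : Fin S → Fin J → EuclideanSpace ℝ P) (Verif : List V → Bool)
    (θ : EuclideanSpace ℝ P) (s : Fin S) (j : Fin J) : ℝ≥0∞ :=
  ENNReal.ofReal (condPr D γ σ h θ (VE Verif) (Av σ s j)) /
    ENNReal.ofReal (condPr D γ σ h θ (VE Verif) ((Av σ s j)ᶜ))

/-- The REINFORCE parameter update
`θ' = θ + (η/B)·Σ_b Σ_s ∇_θ log π_θ(y_s^{(b)} | x_{s−1}^{(b)})` on a batch `bs`. -/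
def update (γ : ℝ) (σ : Fin J → List V → V)
    (h : Fin S → Fin J → EuclideanSpace ℝ P) (η : ℝ)
    (θ : EuclideanSpace ℝ P) (bs : Fin Bsz → Traj V S) : EuclideanSpace ℝ P :=
  θ + (η / (Bsz : ℝ)) • ∑ b : Fin Bsz, ∑ s : Fin S,
    gradient (fun θ' => Real.log (policy γ σ h θ' s (pref (bs b) s.val) ((bs b).2 s))) θ

/-- Density of a single trajectory of the training batch: a draw from `P_θ`
conditioned on the verifier accepting. -/
def condDens (D : List V → ℝ) (γ : ℝ) (σ : Fin J → List V → V)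
    (h : Fin S → Fin J → EuclideanSpace ℝ P) (Verif : List V → Bool)
    (θ : EuclideanSpace ℝ P) (ω : Traj V S) : ℝ :=
  Set.indicator (VE Verif) (dens D γ σ h θ) ω / Pr D γ σ h θ (VE Verif)

/-- Expectation, over an i.i.d. batch of `Bsz` positive samples
(drawn from `P_θ(· | V = 1)`), of a function of the batch. -/
def Ebatch (D : List V → ℝ) (γ : ℝ) (σ : Fin J → List V → V)
    (h : Fin S → Fin J → EuclideanSpace ℝ P) (Verif : List V → Bool)
    (θ : EuclideanSpace ℝ P) (F : (Fin Bsz → Traj V S) → ℝ) : ℝ :=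
  ∑' bs : Fin Bsz → Traj V S, (∏ b : Fin Bsz, condDens D γ σ h Verif θ (bs b)) * F bs

/-- The empirical discrepancy
`Q_{s,j} = (1/B)·Σ_b (1[y_s^{(b)} = σ_j(x_{s−1}^{(b)})] − π_θ(σ_j(x_{s−1}^{(b)}) | x_{s−1}^{(b)}))`. -/
def Q (γ : ℝ) (σ : Fin J → List V → V)
    (h : Fin S → Fin J → EuclideanSpace ℝ P) (θ : EuclideanSpace ℝ P)
    (bs : Fin Bsz → Traj V S) (s : Fin S) (j : Fin J) : ℝ :=
  (1 / (Bsz : ℝ)) * ∑ b : Fin Bsz,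
    ((if (bs b).2 s = σ j (pref (bs b) s.val) then (1 : ℝ) else 0)
      - policy γ σ h θ s (pref (bs b) s.val) (σ j (pref (bs b) s.val)))

/-- The first `n` steps of the ground-truth chain of thought started at prompt `x0`:
apply `σ_{τ(1)}, …, σ_{τ(n)}` autoregressively. -/
def fstarPref (σ : Fin J → List V → V) (τ : Fin S → Fin J) (x0 : List V)
    (n : ℕ) : List V :=
  ((List.finRange S).take n).foldl (fun acc s => acc ++ [σ (τ s) acc]) x0

/-- The target function `f*`: the full ground-truth chain of thought. -/
def fstar (σ : Fin J → List V → V) (τ : Fin S → Fin J) (x0 : List V) : List V :=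
  fstarPref σ τ x0 S

/-- `P_θ(f*(x0) | x0)`: the probability of generating exactly the ground-truth
completion from prompt `x0` (chain rule of probability). -/
def targetProb (γ : ℝ) (σ : Fin J → List V → V)
    (h : Fin S → Fin J → EuclideanSpace ℝ P) (τ : Fin S → Fin J)
    (θ : EuclideanSpace ℝ P) (x0 : List V) : ℝ :=
  ∏ s : Fin S, policy γ σ h θ s (fstarPref σ τ x0 s.val) (σ (τ s) (fstarPref σ τ x0 s.val))

/-- The cross-entropy loss `L(θ) = E_{x0∼D}[log(1/P_θ(f*(x0) | x0))]`. -/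
def celoss (D : List V → ℝ) (γ : ℝ) (σ : Fin J → List V → V)
    (h : Fin S → Fin J → EuclideanSpace ℝ P) (τ : Fin S → Fin J)
    (θ : EuclideanSpace ℝ P) : ℝ :=
  ∑' x0 : List V, D x0 * Real.log (1 / targetProb γ σ h τ θ x0)

/-- The training iterates: `θ^{(0)} = θ0` and
`θ^{(t+1)} = update(θ^{(t)}, batch t)`. -/
def thetaSeq (γ : ℝ) (σ : Fin J → List V → V)
    (h : Fin S → Fin J → EuclideanSpace ℝ P) (η : ℝ) (θ0 : EuclideanSpace ℝ P)
    (ω : ℕ → Fin Bsz → Traj V S) : ℕ → EuclideanSpace ℝ P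
  | 0 => θ0
  | t + 1 => update γ σ h η (thetaSeq γ σ h η θ0 ω t) (ω t)

/-- Extension of a finite-horizon family of batches to all times. -/
def extendBatches (T : ℕ) (ωf : Fin T → Fin Bsz → Traj V S) :
    ℕ → Fin Bsz → Traj V S :=
  fun t => if ht : t < T then ωf ⟨t, ht⟩ else fun _ => ([], fun _ => Classical.arbitrary V)

/-- Density of the whole training run over horizon `T`: at each iteration `t` the
batch is drawn i.i.d. from `P_{θ^{(t)}}(· | V = 1)`. -/
def trainDens (D : List V → ℝ) (γ : ℝ) (σ : Fin J → List V → V)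
    (h : Fin S → Fin J → EuclideanSpace ℝ P) (Verif : List V → Bool) (η : ℝ)
    (θ0 : EuclideanSpace ℝ P) (T : ℕ) (ωf : Fin T → Fin Bsz → Traj V S) : ℝ :=
  ∏ t : Fin T, ∏ b : Fin Bsz,
    condDens D γ σ h Verif (thetaSeq γ σ h η θ0 (extendBatches T ωf) t.val) (ωf t b)

/-- Probability, over the training randomness up to horizon `T`, of an event on the
batches. -/
def PrTrain (D : List V → ℝ) (γ : ℝ) (σ : Fin J → List V → V)
    (h : Fin S → Fin J → EuclideanSpace ℝ P) (Verif : List V → Bool) (η : ℝ)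
    (θ0 : EuclideanSpace ℝ P) (T : ℕ)
    (E : Set (Fin T → Fin Bsz → Traj V S)) : ℝ :=
  ∑' ωf : Fin T → Fin Bsz → Traj V S,
    Set.indicator E (trainDens D γ σ h Verif η θ0 T) ωf

end RLVR

namespace ENNReal

lemma ofReal_div_ofReal_pos_iff {x y : ℝ} : 0 < ENNReal.ofReal x / ENNReal.ofReal y ↔ 0 < x := by
  rw [ENNReal.div_pos_iff, ← pos_iff_ne_zero, ENNReal.ofReal_pos]
  exact and_iff_left ENNReal.ofReal_ne_top

lemma ofReal_div_ofReal_eq_zero_iff {x y : ℝ} :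
    ENNReal.ofReal x / ENNReal.ofReal y = 0 ↔ x ≤ 0 := by
  rw [ENNReal.div_eq_zero_iff, ENNReal.ofReal_eq_zero]
  exact or_iff_left ENNReal.ofReal_ne_top

lemma toReal_inv_ofReal_div_ofReal {x y : ℝ} (hx : 0 < x) (hy : 0 ≤ y) :
    ((ENNReal.ofReal x / ENNReal.ofReal y)⁻¹).toReal = y / x := by
  rw [ENNReal.inv_div (Or.inl ENNReal.ofReal_ne_top) (Or.inr (ENNReal.ofReal_pos.2 hx).ne'),
    ENNReal.toReal_div, ENNReal.toReal_ofReal hy, ENNReal.toReal_ofReal hx.le]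

end ENNReal

namespace RLVR

open Finset Real

section Softmax

variable {V : Type*} [Fintype V]

lemma softmax_pos (L : V → ℝ) (y : V) : 0 < softmax L y :=
  div_pos (exp_pos _) (sum_pos (fun _ _ => exp_pos _) ⟨y, mem_univ y⟩)

lemma sum_softmax [Nonempty V] (L : V → ℝ) : ∑ y, softmax L y = 1 := by
  simp only [softmax]
  rw [← sum_div, div_self (sum_pos (fun _ _ => exp_pos _) univ_nonempty).ne']

variable {E : Type*} [NormedAddCommGroup E] [InnerProductSpace ℝ E]

lemma hasFDerivAt_log_softmax_inner (u : V → E) (y : V) (θ : E) :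
    HasFDerivAt (fun θ => log (softmax (fun w => ⟪u w, θ⟫) y))
      (innerSL ℝ (u y) - ∑ w, softmax (fun w => ⟪u w, θ⟫) w • innerSL ℝ (u w)) θ := by
  have hZ : ∀ θ : E, 0 < ∑ w, exp ⟪u w, θ⟫ :=
    fun θ => sum_pos (fun _ _ => exp_pos _) ⟨y, mem_univ y⟩
  have hfun : (fun θ => log (softmax (fun w => ⟪u w, θ⟫) y))
      = fun θ => ⟪u y, θ⟫ - log (∑ w, exp ⟪u w, θ⟫) := by
    funext θ
    rw [softmax, log_div (exp_ne_zero _) (hZ θ).ne', log_exp]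
  have hlin : ∀ w, HasFDerivAt (fun θ : E => ⟪u w, θ⟫) (innerSL ℝ (u w)) θ :=
    fun w => (innerSL ℝ (u w)).hasFDerivAt
  have hlogZ := (HasFDerivAt.fun_sum fun w _ => (hlin w).exp).log (hZ θ).ne'
  rw [hfun]
  refine ((hlin y).sub hlogZ).congr_fderiv ?_
  rw [smul_sum]
  congr 2 with w
  rw [smul_smul, softmax, div_eq_inv_mul]

lemma inner_gradient_log_softmax_inner [CompleteSpace E] (u : V → E) (y : V) (θ v : E) :
    ⟪gradient (fun θ => log (softmax (fun w => ⟪u w, θ⟫) y)) θ, v⟫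
      = ⟪u y, v⟫ - ∑ w, softmax (fun w => ⟪u w, θ⟫) w * ⟪u w, v⟫ := by
  rw [gradient, InnerProductSpace.toDual_symm_apply,
    (hasFDerivAt_log_softmax_inner u y θ).fderiv]
  simp

end Softmax

section Logits

variable {V : Type*} [DecidableEq V] {P : Type*} [Fintype P] {J S : ℕ}
  {γ : ℝ} {σ : Fin J → List V → V} {h : Fin S → Fin J → EuclideanSpace ℝ P}

def feature (γ : ℝ) (σ : Fin J → List V → V) (h : Fin S → Fin J → EuclideanSpace ℝ P)
    (s : Fin S) (x : List V) (w : V) : EuclideanSpace ℝ P :=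
  ∑ j, (if σ j x = w then γ else 0) • h s j

lemma model_eq_inner_feature (θ : EuclideanSpace ℝ P) (s : Fin S) (x : List V) (w : V) :
    model γ σ h θ s x w = ⟪feature γ σ h s x w, θ⟫ := by
  simp only [model, feature, sum_inner, real_inner_smul_left]

lemma inner_feature_of_orthonormal (hh : Orthonormal ℝ fun sj : Fin S × Fin J => h sj.1 sj.2)
    (s' s : Fin S) (j : Fin J) (x : List V) (w : V) :
    ⟪feature γ σ h s' x w, h s j⟫ = if s' = s ∧ σ j x = w then γ else 0 := by
  have horth := orthonormal_iff_ite.mp hh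
  simp only [feature, sum_inner, real_inner_smul_left]
  by_cases hs : s' = s
  · subst hs
    simp [horth (_, _) (_, _)]
  · simp [horth (_, _) (_, _), hs]

lemma policy_eq_softmax_inner [Fintype V] (θ : EuclideanSpace ℝ P) (s : Fin S) (x : List V)
    (y : V) : policy γ σ h θ s x y = softmax (fun w => ⟪feature γ σ h s x w, θ⟫) y :=
  congrArg (softmax · y) (funext (model_eq_inner_feature θ s x))

lemma inner_gradient_log_policy [Fintype V]
    (hh : Orthonormal ℝ fun sj : Fin S × Fin J => h sj.1 sj.2)
    (θ : EuclideanSpace ℝ P) (s' s : Fin S) (j : Fin J) (x : List V) (y : V) :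
    ⟪h s j, gradient (fun θ => log (policy γ σ h θ s' x y)) θ⟫
      = if s' = s then γ * ((if y = σ j x then 1 else 0) - policy γ σ h θ s x (σ j x))
        else 0 := by
  simp only [policy_eq_softmax_inner]
  rw [real_inner_comm, inner_gradient_log_softmax_inner]
  simp only [inner_feature_of_orthonormal hh]
  by_cases hs : s' = s
  · subst hs
    simp only [eq_comm, true_and, mul_ite, mul_zero, sum_ite_eq', mem_univ, ↓reduceIte]
    split_ifs <;> ring
  · simp [hs]

lemma sum_policy [Fintype V] [Nonempty V] (θ : EuclideanSpace ℝ P) (s : Fin S) (x : List V) :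
    ∑ v, policy γ σ h θ s x v = 1 :=
  sum_softmax _

/-- `π_θ(σ_j(x) | x)`: only the `J` task tokens have nonzero logits, whence the normalizer
`card V + ∑ j', (exp (γ ⟪h s j', θ⟫) - 1)`. -/
def taskProb (V : Type*) [Fintype V] (γ : ℝ) (h : Fin S → Fin J → EuclideanSpace ℝ P)
    (θ : EuclideanSpace ℝ P) (s : Fin S) (j : Fin J) : ℝ :=
  exp (γ * ⟪h s j, θ⟫) / (∑ j', (exp (γ * ⟪h s j', θ⟫) - 1) + Fintype.card V)

variable (hσ : ∀ j j' : Fin J, j ≠ j' → ∀ x : List V, σ j x ≠ σ j' x)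
include hσ

lemma model_apply_task (θ : EuclideanSpace ℝ P) (s : Fin S) (x : List V) (j : Fin J) :
    model γ σ h θ s x (σ j x) = γ * ⟪h s j, θ⟫ := by
  rw [model, sum_eq_single j (fun j' _ hj' => by rw [if_neg (hσ j' j hj' x), zero_mul])
    (fun hj => absurd (mem_univ j) hj), if_pos rfl]

lemma sum_exp_model [Fintype V] (θ : EuclideanSpace ℝ P) (s : Fin S) (x : List V) :
    ∑ w, exp (model γ σ h θ s x w) = ∑ j, (exp (γ * ⟪h s j, θ⟫) - 1) + Fintype.card V := by
  have hinj : Function.Injective (σ · x) := fun j j' hjj' => by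
    by_contra hne
    exact hσ j j' hne x hjj'
  have hoff : ∀ w ∉ Set.range (σ · x), exp (model γ σ h θ s x w) - 1 = 0 := by
    intro w hw
    have : model γ σ h θ s x w = 0 :=
      sum_eq_zero fun j _ => by rw [if_neg fun hj => hw ⟨j, hj⟩, zero_mul]
    rw [this, exp_zero, sub_self]
  rw [Fintype.sum_of_injective _ hinj _ _ hoff fun j => by rw [model_apply_task hσ],
    sum_sub_distrib]
  simp

lemma policy_apply_task [Fintype V] (θ : EuclideanSpace ℝ P) (s : Fin S) (x : List V) (j : Fin J) :
    policy γ σ h θ s x (σ j x) = taskProb V γ h θ s j := by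
  rw [policy, softmax, model_apply_task hσ, sum_exp_model hσ, taskProb]

lemma taskProb_pos [Fintype V] (θ : EuclideanSpace ℝ P) (s : Fin S) (j : Fin J) :
    0 < taskProb V γ h θ s j :=
  policy_apply_task hσ θ s [] j ▸ softmax_pos _ _

lemma model_update_sub_eq_Q [Fintype V] (hh : Orthonormal ℝ fun sj : Fin S × Fin J => h sj.1 sj.2)
    {B : ℕ} (η : ℝ) (θ : EuclideanSpace ℝ P) (bs : Fin B → Traj V S) (s : Fin S) (j : Fin J)
    (x : List V) :
    model γ σ h (update γ σ h η θ bs) s x (σ j x) - model γ σ h θ s x (σ j x)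
      = η * γ ^ 2 * Q γ σ h θ bs s j := by
  rw [model_apply_task hσ, model_apply_task hσ, ← mul_sub, ← inner_sub_right, update,
    add_sub_cancel_left, real_inner_smul_right, inner_sum]
  simp only [inner_sum, inner_gradient_log_policy hh, sum_ite_eq', mem_univ, if_true, Q]
  rw [← mul_sum]
  ring

end Logits

section ChainRule

variable {V : Type*} {n : ℕ}

def seqProb (p : Fin n → List V → V → ℝ) (x0 : List V) (y : Fin n → V) : ℝ :=
  ∏ i, p i (x0 ++ (List.ofFn y).take i) (y i)

lemma seqProb_nonneg {p : Fin n → List V → V → ℝ} (hp : ∀ i x v, 0 ≤ p i x v)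
    (x0 : List V) (y : Fin n → V) : 0 ≤ seqProb p x0 y :=
  prod_nonneg fun _ _ => hp _ _ _

lemma seqProb_cons (p : Fin (n + 1) → List V → V → ℝ) (x0 : List V) (a : V) (z : Fin n → V) :
    seqProb p x0 (Fin.cons a z) = p 0 x0 a * seqProb (fun i => p i.succ) (x0 ++ [a]) z := by
  simp [seqProb, Fin.prod_univ_succ, List.ofFn_succ]

variable [Fintype V]

lemma sum_seqProb_mul_eq_sum_cons (p : Fin (n + 1) → List V → V → ℝ) (x0 : List V)
    (G : (Fin (n + 1) → V) → ℝ) :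
    ∑ y, seqProb p x0 y * G y
      = ∑ a, p 0 x0 a * ∑ z, seqProb (fun i => p i.succ) (x0 ++ [a]) z * G (Fin.cons a z) := by
  rw [← (Fin.consEquiv fun _ => V).sum_comp, Fintype.sum_prod_type]
  refine sum_congr rfl fun a _ => ?_
  rw [mul_sum]
  exact sum_congr rfl fun z _ => by rw [← mul_assoc, ← seqProb_cons]; rfl

variable {p : Fin n → List V → V → ℝ} (hp : ∀ i x, ∑ v, p i x v = 1)
include hp

lemma sum_seqProb (x0 : List V) : ∑ y, seqProb p x0 y = 1 := by
  induction n generalizing x0 with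
  | zero => simp [seqProb]
  | succ n ih =>
    simpa [hp, ih (fun i => hp i.succ)] using sum_seqProb_mul_eq_sum_cons p x0 fun _ => 1

lemma sum_seqProb_mul_step (m : Fin n) (φ : List V → V → ℝ) (c : ℝ)
    (hφ : ∀ x, ∑ v, p m x v * φ x v = c) (x0 : List V) :
    ∑ y, seqProb p x0 y * φ (x0 ++ (List.ofFn y).take m) (y m) = c := by
  induction n generalizing x0 with
  | zero => exact m.elim0
  | succ n ih =>
    rw [sum_seqProb_mul_eq_sum_cons]
    cases m using Fin.cases with
    | zero =>
      simp [← sum_mul, sum_seqProb (fun i => hp i.succ), hφ]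
    | succ m =>
      have hpref : ∀ (a : V) (z : Fin n → V), x0 ++ (List.ofFn (Fin.cons a z)).take m.succ
          = (x0 ++ [a]) ++ (List.ofFn z).take m := by
        simp [List.ofFn_succ]
      simp only [hpref, Fin.cons_succ, ih (fun i => hp i.succ) m hφ, ← sum_mul, hp, one_mul]

end ChainRule

section Batch

variable {Ω : Type*}

lemma hasSum_prod_pi {B : ℕ} {g : Fin B → Ω → ℝ} {c : Fin B → ℝ} (hg0 : ∀ b ω, 0 ≤ g b ω)
    (hg : ∀ b, HasSum (g b) (c b)) :
    HasSum (fun bs : Fin B → Ω => ∏ b, g b (bs b)) (∏ b, c b) := by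
  induction B with
  | zero => simp
  | succ B ih =>
    have htail := ih (g := fun b => g b.succ) (c := fun b => c b.succ) (fun b => hg0 b.succ)
      fun b => hg b.succ
    have hhead : 0 ≤ g 0 := hg0 0
    have htail0 : 0 ≤ fun z : Fin B → Ω => ∏ b, g b.succ (z b) :=
      fun _ => prod_nonneg fun _ _ => hg0 _ _
    have hsumm := Summable.mul_of_nonneg (hg 0).summable htail.summable hhead htail0
    have hmul := (hg 0).mul htail hsumm
    rw [← (Fin.consEquiv fun _ => Ω).hasSum_iff, Fin.prod_univ_succ]
    exact hmul.congr_fun fun ⟨a, z⟩ =>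
      Fin.prod_univ_succ fun b => g b ((Fin.cons a z : Fin (B + 1) → Ω) b)

variable {d χ : Ω → ℝ} (hd0 : ∀ ω, 0 ≤ d ω) (hd : HasSum d 1)
include hd0 hd

lemma hasSum_prod_mul_apply (hχ0 : ∀ ω, 0 ≤ χ ω) {m : ℝ} (hχ : HasSum (fun ω => d ω * χ ω) m)
    {B : ℕ} (b₀ : Fin B) :
    HasSum (fun bs : Fin B → Ω => (∏ b, d (bs b)) * χ (bs b₀)) m := by
  have hg : ∀ b, HasSum (fun ω => d ω * if b = b₀ then χ ω else 1) (if b = b₀ then m else 1) :=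
    fun b => by split_ifs <;> simpa
  have := hasSum_prod_pi (fun b ω => mul_nonneg (hd0 ω) (by split_ifs <;> simp [hχ0])) hg
  convert this using 1
  · funext bs
    rw [prod_mul_distrib, Fintype.prod_ite_eq']
  · rw [Fintype.prod_ite_eq']

lemma hasSum_prod_mul_mean_sub (hχ0 : ∀ ω, 0 ≤ χ ω) {m : ℝ}
    (hχ : HasSum (fun ω => d ω * χ ω) m) {B : ℕ} (hB : B ≠ 0) (κ : ℝ) :
    HasSum (fun bs : Fin B → Ω => (∏ b, d (bs b)) * (1 / B * ∑ b, (χ (bs b) - κ))) (m - κ) := by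
  have hmass : HasSum (fun bs : Fin B → Ω => ∏ b, d (bs b)) 1 := by
    simpa using hasSum_prod_pi (fun _ => hd0) fun _ => hd
  have hterm := fun b : Fin B =>
    (hasSum_prod_mul_apply hd0 hd hχ0 hχ b).sub (hmass.mul_left κ)
  have hsum := (hasSum_sum (s := univ) fun b _ => hterm b).mul_left (1 / (B : ℝ))
  rw [sum_const, card_univ, Fintype.card_fin, nsmul_eq_mul, mul_one, ← mul_assoc,
    one_div_mul_cancel (Nat.cast_ne_zero.2 hB), one_mul] at hsum
  refine hsum.congr_fun fun bs => ?_
  rw [mul_sum, mul_sum, mul_sum]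
  exact sum_congr rfl fun b _ => by ring

end Batch

section Trajectories

variable {V : Type*} [Fintype V] [DecidableEq V] {P : Type*} [Fintype P] {J S : ℕ}
  {D : List V → ℝ} {γ : ℝ} {σ : Fin J → List V → V} {h : Fin S → Fin J → EuclideanSpace ℝ P}
  {θ : EuclideanSpace ℝ P}

lemma dens_eq_mul_seqProb (ω : Traj V S) :
    dens D γ σ h θ ω = D ω.1 * seqProb (policy γ σ h θ) ω.1 ω.2 :=
  rfl

variable (hD0 : ∀ x, 0 ≤ D x)
include hD0

lemma dens_nonneg (ω : Traj V S) : 0 ≤ dens D γ σ h θ ω :=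
  mul_nonneg (hD0 _) (seqProb_nonneg (p := policy γ σ h θ) (fun _ _ _ => (softmax_pos _ _).le) _ _)

lemma Pr_nonneg (E : Set (Traj V S)) : 0 ≤ Pr D γ σ h θ E :=
  tsum_nonneg (Set.indicator_nonneg fun ω _ => dens_nonneg hD0 ω)

variable (hD : HasSum D 1)
include hD

lemma hasSum_dens_mul {g : List V → (Fin S → V) → ℝ} (hg0 : ∀ x y, 0 ≤ g x y) {c : ℝ}
    (hg : ∀ x, ∑ y, seqProb (policy γ σ h θ) x y * g x y = c) :
    HasSum (fun ω : Traj V S => dens D γ σ h θ ω * g ω.1 ω.2) c := by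
  have hfiber : ∀ x, HasSum (fun y => dens D γ σ h θ (x, y) * g x y) (D x * c) := fun x => by
    convert hasSum_fintype fun y => dens D γ σ h θ (x, y) * g x y using 1
    simp only [dens_eq_mul_seqProb, ← hg x, mul_sum, mul_assoc]
  have hsumm : Summable fun ω : Traj V S => dens D γ σ h θ ω * g ω.1 ω.2 := by
    refine (summable_prod_of_nonneg fun ω => ?_).2
      ⟨fun x => (hfiber x).summable, ?_⟩
    · exact mul_nonneg (dens_nonneg hD0 ω) (hg0 _ _)
    · simpa only [(hfiber _).tsum_eq] using hD.summable.mul_right c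
  rw [hsumm.hasSum_iff, hsumm.tsum_prod, tsum_congr fun x => (hfiber x).tsum_eq, tsum_mul_right,
    hD.tsum_eq, one_mul]

variable [Nonempty V]

lemma hasSum_dens : HasSum (dens D γ σ h θ (S := S)) 1 := by
  simpa using hasSum_dens_mul (g := fun _ _ => 1) hD0 hD (fun _ _ => zero_le_one)
    fun x => by simpa using sum_seqProb (sum_policy θ) x

lemma summable_indicator_dens (E : Set (Traj V S)) :
    Summable (E.indicator (dens D γ σ h θ)) :=
  (hasSum_dens hD0 hD).summable.indicator E

lemma Pr_univ : Pr D γ σ h θ (Set.univ : Set (Traj V S)) = 1 := by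
  rw [Pr, Set.indicator_univ, (hasSum_dens hD0 hD).tsum_eq]

lemma Pr_inter_add_inter_compl (F E : Set (Traj V S)) :
    Pr D γ σ h θ (F ∩ E) + Pr D γ σ h θ (F ∩ Eᶜ) = Pr D γ σ h θ F := by
  have hF := summable_indicator_dens (γ := γ) (σ := σ) (h := h) (θ := θ) hD0 hD F
  rw [Pr, Pr, Pr, Set.inter_comm F E, Set.inter_comm F Eᶜ, ← Set.indicator_indicator,
    ← Set.indicator_indicator, ← (hF.indicator E).tsum_add (hF.indicator Eᶜ)]
  exact tsum_congr fun ω => congrFun (Set.indicator_self_add_compl E _) ω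

lemma Pr_mono {E F : Set (Traj V S)} (hEF : E ⊆ F) : Pr D γ σ h θ E ≤ Pr D γ σ h θ F :=
  (summable_indicator_dens hD0 hD E).tsum_le_tsum
    (Set.indicator_le_indicator_of_subset hEF fun _ => dens_nonneg hD0 _)
    (summable_indicator_dens hD0 hD F)

lemma Pr_Av (hσ : ∀ j j' : Fin J, j ≠ j' → ∀ x : List V, σ j x ≠ σ j' x)
    (s : Fin S) (j : Fin J) : Pr D γ σ h θ (Av σ s j) = taskProb V γ h θ s j := by
  have hstep : ∀ x, ∑ v, policy γ σ h θ s x v * (if v = σ j x then 1 else 0)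
      = taskProb V γ h θ s j := fun x => by simp [policy_apply_task hσ]
  have := hasSum_dens_mul hD0 hD
    (g := fun x y => if y s = σ j (x ++ (List.ofFn y).take s) then 1 else 0)
    (fun _ _ => by split_ifs <;> norm_num)
    (sum_seqProb_mul_step (sum_policy θ) s _ _ hstep)
  refine (this.congr_fun fun ω => ?_).tsum_eq
  simp [Set.indicator_apply, Av, pref]

variable {Verif : List V → Bool}

lemma hasSum_condDens_mul_ite (s : Fin S) (j : Fin J) :
    HasSum (fun ω => condDens D γ σ h Verif θ ω * if ω.2 s = σ j (pref ω s) then 1 else 0)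
      (Pr D γ σ h θ (VE Verif ∩ Av σ s j) / Pr D γ σ h θ (VE Verif)) := by
  refine ((summable_indicator_dens hD0 hD _).hasSum.div_const _).congr_fun fun ω => ?_
  rw [Set.inter_comm, ← Set.indicator_indicator]
  by_cases hA : ω.2 s = σ j (pref ω s)
  · rw [if_pos hA, Set.indicator_of_mem (show ω ∈ Av σ s j from hA), mul_one, condDens]
  · rw [if_neg hA, Set.indicator_of_notMem (show ω ∉ Av σ s j from hA), mul_zero, zero_div]

variable (hpos : 0 < Pr D γ σ h θ (VE Verif))
include hpos

omit hD [Nonempty V] in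
lemma condDens_nonneg (ω : Traj V S) : 0 ≤ condDens D γ σ h Verif θ ω :=
  div_nonneg (Set.indicator_nonneg (fun ω _ => dens_nonneg hD0 ω) ω) hpos.le

lemma hasSum_condDens : HasSum (condDens D γ σ h Verif θ) 1 := by
  have := (summable_indicator_dens (γ := γ) (σ := σ) (h := h) (θ := θ) hD0 hD
    (VE Verif)).hasSum.div_const (Pr D γ σ h θ (VE Verif))
  rwa [← Pr, div_self hpos.ne'] at this

lemma Ebatch_model_update_sub (hσ : ∀ j j' : Fin J, j ≠ j' → ∀ x : List V, σ j x ≠ σ j' x)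
    (hh : Orthonormal ℝ fun sj : Fin S × Fin J => h sj.1 sj.2) {B : ℕ} (hB : B ≠ 0) (η : ℝ)
    (s : Fin S) (j : Fin J) (x : List V) :
    Ebatch (Bsz := B) D γ σ h Verif θ
        (fun bs => model γ σ h (update γ σ h η θ bs) s x (σ j x) - model γ σ h θ s x (σ j x))
      = η * γ ^ 2 * (Pr D γ σ h θ (VE Verif ∩ Av σ s j) / Pr D γ σ h θ (VE Verif)
          - taskProb V γ h θ s j) := by
  have hmean := hasSum_prod_mul_mean_sub (condDens_nonneg hD0 hpos) (hasSum_condDens hD0 hD hpos)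
    (fun _ => by split_ifs <;> norm_num) (hasSum_condDens_mul_ite hD0 hD s j) hB
    (taskProb V γ h θ s j)
  rw [Ebatch, ← (hmean.mul_left (η * γ ^ 2)).tsum_eq]
  refine tsum_congr fun bs => ?_
  rw [model_update_sub_eq_Q hσ hh, Q]
  simp only [policy_apply_task hσ]
  ring

end Trajectories

lemma div_add_sub_eq_mul_one_sub {a b p : ℝ} (ha : 0 < a) (hb : 0 ≤ b) (hp : 0 < p)
    (hbp : b ≤ 1 - p) :
    a / (a + b) - p = a / (a + b) * (1 - p) * (1 - b / (1 - p) / (a / p)) := by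
  rcases (hb.trans hbp).eq_or_lt with hp1 | hp1
  · obtain rfl : p = 1 := by linarith
    obtain rfl : b = 0 := by linarith
    simp [ha.ne']
  · have : 1 - p ≠ 0 := hp1.ne'
    field_simp
    ring

/-- With `a = P(V ∩ A)`, `b = P(V ∩ Aᶜ)` and `p = P(A)`, the ratio is
`ρ = (a / p) / (b / (1 - p))`. -/
lemma div_add_sub_eq_of_ratio {a b p : ℝ} (ha : 0 ≤ a) (hb : 0 ≤ b) (hp : 0 < p)
    (hbp : b ≤ 1 - p) :
    (0 < ENNReal.ofReal (a / p) / ENNReal.ofReal (b / (1 - p)) →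
      a / (a + b) - p = a / (a + b) * (1 - p)
        * (1 - ((ENNReal.ofReal (a / p) / ENNReal.ofReal (b / (1 - p)))⁻¹).toReal))
    ∧ (ENNReal.ofReal (a / p) / ENNReal.ofReal (b / (1 - p)) = 0 → a / (a + b) - p = -p) := by
  refine ⟨fun hρ => ?_, fun hρ => ?_⟩
  · have ha := (div_pos_iff_of_pos_right hp).1 (ENNReal.ofReal_div_ofReal_pos_iff.1 hρ)
    rw [ENNReal.toReal_inv_ofReal_div_ofReal (div_pos ha hp) (div_nonneg hb (hb.trans hbp)),
      div_add_sub_eq_mul_one_sub ha hb hp hbp]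
  · have ha' := (div_le_iff₀ hp).1 (ENNReal.ofReal_div_ofReal_eq_zero_iff.1 hρ)
    obtain rfl : a = 0 := le_antisymm (by simpa using ha') ha
    simp

end RLVR

open RLVR in
theorem stmt0_general {V : Type*} [Fintype V] [DecidableEq V] [Nonempty V]
    {P : Type*} [Fintype P] {J S Bsz : ℕ}
    (hBsz : 0 < Bsz)
    (γ η : ℝ)
    (σ : Fin J → List V → V)
    (hσ : ∀ j j' : Fin J, j ≠ j' → ∀ x : List V, σ j x ≠ σ j' x)
    (h : Fin S → Fin J → EuclideanSpace ℝ P)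
    (hh : Orthonormal ℝ fun sj : Fin S × Fin J => h sj.1 sj.2)
    (D : List V → ℝ) (hD0 : ∀ x, 0 ≤ D x) (hD1 : ∑' x : List V, D x = 1)
    (Verif : List V → Bool)
    (θt : EuclideanSpace ℝ P)
    (hpos : 0 < Pr D γ σ h θt (VE Verif))
    (s : Fin S) (j : Fin J) (xprev : List V) :
    (0 < ratio D γ σ h Verif θt s j →
      Ebatch (Bsz := Bsz) D γ σ h Verif θt
        (fun bs => model γ σ h (update γ σ h η θt bs) s xprev (σ j xprev)
            - model γ σ h θt s xprev (σ j xprev))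
        = η * γ ^ 2 * condPr D γ σ h θt (Av σ s j) (VE Verif)
            * (1 - Pr D γ σ h θt (Av σ s j))
            * (1 - ((ratio D γ σ h Verif θt s j)⁻¹).toReal))
    ∧ (ratio D γ σ h Verif θt s j = 0 →
      Ebatch (Bsz := Bsz) D γ σ h Verif θt
        (fun bs => model γ σ h (update γ σ h η θt bs) s xprev (σ j xprev)
            - model γ σ h θt s xprev (σ j xprev))
        = -(η * γ ^ 2 * Pr D γ σ h θt (Av σ s j))) := by
  have hD : HasSum D 1 := by
    refine (Summable.hasSum_iff ?_).2 hD1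
    by_contra hD
    simp [tsum_eq_zero_of_not_summable hD] at hD1
  have hκ := taskProb_pos (γ := γ) (h := h) hσ θt s j
  simp only [ratio, condPr, Ebatch_model_update_sub hD0 hD hpos hσ hh hBsz.ne',
    ← Pr_Av hD0 hD hσ s j, Set.inter_comm (Av σ s j)] at hκ ⊢
  set Pt := Pr D γ σ h θt
  set A := Av σ s j
  have hcompl : Pt Aᶜ = 1 - Pt A := by
    simpa [Pr_univ hD0 hD, eq_sub_iff_add_eq'] using Pr_inter_add_inter_compl hD0 hD Set.univ A
  have hb : Pt (VE Verif ∩ Aᶜ) ≤ 1 - Pt A := hcompl ▸ Pr_mono hD0 hD Set.inter_subset_right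
  have hsplit : Pt (VE Verif ∩ A) + Pt (VE Verif ∩ Aᶜ) = Pt (VE Verif) :=
    Pr_inter_add_inter_compl hD0 hD _ _
  obtain ⟨hpos_case, hzero_case⟩ := div_add_sub_eq_of_ratio (a := Pt (VE Verif ∩ A))
    (b := Pt (VE Verif ∩ Aᶜ)) (Pr_nonneg hD0 _) (Pr_nonneg hD0 _) hκ hb
  rw [hcompl, ← hsplit]
  exact ⟨fun hρ => by rw [hpos_case hρ]; ring, fun hρ => by rw [hzero_case hρ]; ring⟩

open RLVR in
/-- Theorem 5.2 of the paper. Under Assumptions 1 and 2, for any CoT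
step `s`, parameters `θt` at iteration `t`, task `j`, and any fixed string `xprev`
consisting of a prompt plus `s − 1` CoT tokens: if `ρ^{(t)}_{s,j} > 0`, the expected
logit update at token `σ_j(xprev)` over the training batch equals
`η·γ²·P_t(A_{s,j}|V=1)·(1 − P_t(A_{s,j}))·(1 − 1/ρ^{(t)}_{s,j})`,
and if `ρ^{(t)}_{s,j} = 0` it equals `−η·γ²·P_t(A_{s,j})`. -/
theorem stmt0 {V : Type*} [Fintype V] [DecidableEq V] [Nonempty V]
    {P : Type*} [Fintype P] {J S Bsz : ℕ}
    (hS : 0 < S) (hJ : 0 < J) (hBsz : 0 < Bsz)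
    (γ η : ℝ) (hγ : 0 < γ) (hη : 0 < η)
    (σ : Fin J → List V → V)
    (hσ : ∀ j j' : Fin J, j ≠ j' → ∀ x : List V, σ j x ≠ σ j' x)
    (h : Fin S → Fin J → EuclideanSpace ℝ P)
    (hh : Orthonormal ℝ fun sj : Fin S × Fin J => h sj.1 sj.2)
    (D : List V → ℝ) (hD0 : ∀ x, 0 ≤ D x) (hD1 : ∑' x : List V, D x = 1)
    (Verif : List V → Bool) (τ : Fin S → Fin J)
    (hA1 : ∀ x0 : List V, 0 < D x0 → Verif (fstar σ τ x0) = true)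
    (θt : EuclideanSpace ℝ P)
    (hpos : 0 < Pr D γ σ h θt (VE Verif))
    (s : Fin S) (j : Fin J) (xprev : List V) :
    (0 < ratio D γ σ h Verif θt s j →
      Ebatch (Bsz := Bsz) D γ σ h Verif θt
        (fun bs => model γ σ h (update γ σ h η θt bs) s xprev (σ j xprev)
            - model γ σ h θt s xprev (σ j xprev))
        = η * γ ^ 2 * condPr D γ σ h θt (Av σ s j) (VE Verif)
            * (1 - Pr D γ σ h θt (Av σ s j))
            * (1 - ((ratio D γ σ h Verif θt s j)⁻¹).toReal))
    ∧ (ratio D γ σ h Verif θt s j = 0 →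
      Ebatch (Bsz := Bsz) D γ σ h Verif θt
        (fun bs => model γ σ h (update γ σ h η θt bs) s xprev (σ j xprev)
            - model γ σ h θt s xprev (σ j xprev))
        = -(η * γ ^ 2 * Pr D γ σ h θt (Av σ s j))) :=
  stmt0_general hBsz γ η σ hσ h hh D hD0 hD1 Verif θt hpos s j xprev
end
end

section
/- Let (Ω, ℱ, P) be a probability space, let α > 0, and let A_τ and A_j be disjoint events with 0 < P(A_τ) < 1, 0 < P(A_j) < 1, and let V be an event with P(V) > 0 and P(V ∩ A_τᶜ) > 0. Assume P(V | A_τ) ≥ (1 + α)·P(V | A_τᶜ) (the correct task has advantage at least 1 + α) and P(V | A_j) ≤ P(V | A_jᶜ) (the incorrect task has no advantage). Then (P(A_τ | V) − P(A_τ)) − (P(A_j | V) − P(A_j)) ≥ (α/(1+α))·P(A_τ)·(1 − P(A_τ)). -/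
open MeasureTheory
set_option maxHeartbeats 1000000

/-- If the correct-task event `Aτ` has task-advantage ratio at least
`1 + α` with respect to `V` and the incorrect-task event `Aj` (disjoint from `Aτ`) has
task-advantage ratio at most `1`, then the gap between the learning signals satisfies
`(P(Aτ|V) − P(Aτ)) − (P(Aj|V) − P(Aj)) ≥ (α/(1+α))·P(Aτ)·(1 − P(Aτ))`. -/
theorem stmt14 {Ω : Type*} [MeasurableSpace Ω] (P : Measure Ω) [IsProbabilityMeasure P]
    (α : ℝ) (hα : 0 < α)
    (Aτ Aj V : Set Ω) (hAτ : MeasurableSet Aτ) (hAj : MeasurableSet Aj)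
    (hV : MeasurableSet V) (hdisj : Disjoint Aτ Aj)
    (hAτ0 : 0 < P Aτ) (hAτ1 : P Aτ < 1)
    (hAj0 : 0 < P Aj) (hAj1 : P Aj < 1)
    (hV0 : 0 < P V) (hVAτc : 0 < P (V ∩ Aτᶜ))
    (hadvτ : (P (V ∩ Aτ)).toReal / (P Aτ).toReal
        ≥ (1 + α) * ((P (V ∩ Aτᶜ)).toReal / (P Aτᶜ).toReal))
    (hadvj : (P (V ∩ Aj)).toReal / (P Aj).toReal
        ≤ (P (V ∩ Ajᶜ)).toReal / (P Ajᶜ).toReal) :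
    ((P (Aτ ∩ V)).toReal / (P V).toReal - (P Aτ).toReal)
      - ((P (Aj ∩ V)).toReal / (P V).toReal - (P Aj).toReal)
      ≥ (α / (1 + α)) * (P Aτ).toReal * (1 - (P Aτ).toReal) := by
  set a := (P Aτ).toReal with ha_def
  set b := (P Aj).toReal with hb_def
  set v := (P V).toReal with hv_def
  set vτ := (P (V ∩ Aτ)).toReal with hvτ_def
  set vτc := (P (V ∩ Aτᶜ)).toReal with hvτc_def
  set vj := (P (V ∩ Aj)).toReal with hvj_def
  set vjc := (P (V ∩ Ajᶜ)).toReal with hvjc_def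
  have hfin := fun s : Set Ω => measure_ne_top P s
  have ha : 0 < a := ENNReal.toReal_pos hAτ0.ne' (hfin _)
  have ha1 : a < 1 := by
    rw [ha_def, show (1:ℝ) = (1:ENNReal).toReal by simp]
    exact ENNReal.toReal_strict_mono (by simp) hAτ1
  have hb : 0 < b := ENNReal.toReal_pos hAj0.ne' (hfin _)
  have hb1 : b < 1 := by
    rw [hb_def, show (1:ℝ) = (1:ENNReal).toReal by simp]
    exact ENNReal.toReal_strict_mono (by simp) hAj1
  have hv : 0 < v := ENNReal.toReal_pos hV0.ne' (hfin _)
  have hvτc : 0 < vτc := ENNReal.toReal_pos hVAτc.ne' (hfin _)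
  have hvτ : 0 ≤ vτ := ENNReal.toReal_nonneg
  have hvj : 0 ≤ vj := ENNReal.toReal_nonneg
  have hvjc : 0 ≤ vjc := ENNReal.toReal_nonneg
  have hcτ : (P Aτᶜ).toReal = 1 - a := by
    rw [prob_compl_eq_one_sub hAτ, ENNReal.toReal_sub_of_le prob_le_one (by simp)]
    simp [ha_def]
  have hcj : (P Ajᶜ).toReal = 1 - b := by
    rw [prob_compl_eq_one_sub hAj, ENNReal.toReal_sub_of_le prob_le_one (by simp)]
    simp [hb_def]
  have hsumτ : v = vτ + vτc := by
    rw [hv_def, hvτ_def, hvτc_def, ← ENNReal.toReal_add (hfin _) (hfin _),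
      ← Set.diff_eq, measure_inter_add_diff V hAτ]
  have hsumj : v = vj + vjc := by
    rw [hv_def, hvj_def, hvjc_def, ← ENNReal.toReal_add (hfin _) (hfin _),
      ← Set.diff_eq, measure_inter_add_diff V hAj]
  rw [hcτ] at hadvτ
  rw [hcj] at hadvj
  rw [Set.inter_comm Aτ V, Set.inter_comm Aj V]
  rw [← hvτ_def, ← hvj_def]
  clear_value a b v vτ vτc vj vjc
  have h1 : vτ * (1 - a) ≥ (1 + α) * (a * vτc) := by
    rw [ge_iff_le, ← mul_div_assoc, div_le_div_iff₀ (by linarith) ha] at hadvτ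
    nlinarith
  have h2 : vj * (1 - b) ≤ b * vjc := by
    rw [div_le_div_iff₀ hb (by linarith)] at hadvj
    nlinarith
  have hvτav : a * v ≤ vτ := by nlinarith [mul_pos ha hvτc]
  have hjle : vj / v ≤ b := by
    rw [div_le_iff₀ hv]; nlinarith
  have hα1 : (0:ℝ) < 1 + α := by linarith
  have hdiv : α / (1 + α) * (1 + α) = α := div_mul_cancel₀ _ hα1.ne'
  have hτge : vτ / v - a ≥ α / (1 + α) * a * (1 - a) := by
    have key1 : (1 + α) * (vτ - a * v) ≥ α * (vτ * (1 - a)) := by rw [hsumτ]; linarith [h1]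
    have key2 : α * (a * v * (1 - a)) ≤ α * (vτ * (1 - a)) := by
      exact mul_le_mul_of_nonneg_left
        (mul_le_mul_of_nonneg_right hvτav (by linarith : (0:ℝ) ≤ 1 - a)) hα.le
    have key3 : α * (a * v * (1 - a)) ≤ (1 + α) * (vτ - a * v) := by linarith
    have key4 : α / (1 + α) * (a * v * (1 - a)) ≤ vτ - a * v := by
      rw [div_mul_eq_mul_div, div_le_iff₀ hα1]
      linarith [key3]
    rw [ge_iff_le, le_sub_iff_add_le, le_div_iff₀ hv]
    linarith [key4]
  have hjge : vj / v - b ≤ 0 := by linarith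
  linarith
end
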